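/- arXiv:1205.4782 — 3 statements merged into one kernel-verified Lean document; each statement's English description precedes it below -/
import Mathlib

section
/- Let U ⊆ ℂ be open, m ≥ 1 an integer, f : U → ℂ holomorphic and nowhere zero, and g : U → ℂ holomorphic, and set λ := (1+|g|²)^{m/2}|f|. Then λ is smooth and positive on U and the Gaussian curvature of the metric λ²|dz|² satisfies K = −(Δ log λ)/λ² = −2m|g'|² / ((1+|g|²)^{m+2}|f|²) on U; in particular, K vanishes identically on a connected U if and only if g is constant. -/
noncomputable section

/-- The Euclidean Laplacian of `h : ℂ → ℝ`: sum of the second derivatives in the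
two coordinate directions. -/
noncomputable def laplacian (h : ℂ → ℝ) (z : ℂ) : ℝ :=
  iteratedDeriv 2 (fun t : ℝ => h (z + (t : ℂ))) 0 +
    iteratedDeriv 2 (fun t : ℝ => h (z + (t : ℂ) * Complex.I)) 0

/-- The Gaussian curvature `K = -(Δ log lam)/lam²` of the conformal metric `lam²|dz|²`. -/
noncomputable def gaussCurv (lam : ℂ → ℝ) (z : ℂ) : ℝ :=
  -(laplacian (fun w => Real.log (lam w)) z) / (lam z) ^ 2

open Complex Filter

lemma comp_line {h : ℂ → ℂ} {d z v : ℂ} {t : ℝ}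
    (hd : HasDerivAt h d (z + (t : ℂ) * v)) :
    HasDerivAt (fun s : ℝ => h (z + (s : ℂ) * v)) (v * d) t := by
  have hc : HasDerivAt (fun s : ℝ => z + (s : ℂ) * v) v t := by
    simpa using ((Complex.ofRealCLM.hasDerivAt (x := t)).mul_const v).const_add z
  have := (hd.hasFDerivAt.restrictScalars ℝ).comp_hasDerivAt t hc
  simpa [Function.comp_def, smul_eq_mul, mul_comm] using this

def VAL (h : ℂ → ℂ) (a : ℝ) (z v : ℂ) : ℝ :=
  (2 * (‖v‖ ^ 2 * ‖deriv h z‖ ^ 2 + ((starRingEnd ℂ) (h z) * (v ^ 2 * deriv (deriv h) z)).re) *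
      (a + ‖h z‖ ^ 2) -
    (2 * ((starRingEnd ℂ) (h z) * (v * deriv h z)).re) ^ 2) / (a + ‖h z‖ ^ 2) ^ 2

lemma key' (U : Set ℂ) (hUo : IsOpen U) (h : ℂ → ℂ) (hh : DifferentiableOn ℂ h U)
    (a : ℝ) (z : ℂ) (hz : z ∈ U) (hpos : 0 < a + ‖h z‖ ^ 2) (v : ℂ) :
    ∃ u' : ℝ → ℝ,
      (∀ᶠ t in nhds (0 : ℝ), HasDerivAt (fun s : ℝ => Real.log (a + ‖h (z + (s : ℂ) * v)‖ ^ 2)) (u' t) t) ∧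
      HasDerivAt u' (VAL h a z v) 0 := by
  have han : AnalyticOnNhd ℂ h U := hh.analyticOnNhd hUo
  have hh1 : DifferentiableOn ℂ (deriv h) U := han.deriv.differentiableOn
  set c : ℝ → ℂ := fun s => z + (s : ℂ) * v with hc
  have hcont : Continuous c := by fun_prop
  have hW : IsOpen (U ∩ (fun w => a + ‖h w‖ ^ 2) ⁻¹' Set.Ioi 0) := by
    refine ContinuousOn.isOpen_inter_preimage ?_ hUo isOpen_Ioi
    exact continuousOn_const.add ((hh.continuousOn.norm).pow 2)
  have hzW : z ∈ U ∩ (fun w => a + ‖h w‖ ^ 2) ⁻¹' Set.Ioi 0 := ⟨hz, hpos⟩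
  have hV : c ⁻¹' (U ∩ (fun w => a + ‖h w‖ ^ 2) ⁻¹' Set.Ioi 0) ∈ nhds (0 : ℝ) := by
    apply (hW.preimage hcont).mem_nhds
    simpa [hc] using hzW
  refine ⟨fun t => 2 * ((starRingEnd ℂ) (h (c t)) * (v * deriv h (c t))).re / (a + ‖h (c t)‖ ^ 2),
    ?_, ?_⟩
  · filter_upwards [hV] with t ht
    obtain ⟨htU, htp⟩ := ht
    have htp : 0 < a + ‖h (c t)‖ ^ 2 := htp
    have hH : HasDerivAt (fun s : ℝ => h (c s)) (v * deriv h (c t)) t :=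
      comp_line ((hh.differentiableAt (hUo.mem_nhds htU)).hasDerivAt)
    have hN : HasDerivAt (fun s : ℝ => a + ‖h (c s)‖ ^ 2)
        (2 * inner ℝ (h (c t)) (v * deriv h (c t))) t := (hH.norm_sq).const_add a
    have := hN.log (ne_of_gt htp)
    rw [Complex.inner, mul_comm (v * deriv h (c t))] at this
    simpa [mul_div_assoc] using this
  · have hzv : z + ((0:ℝ) : ℂ) * v = z := by simp
    have hd0 : HasDerivAt h (deriv h z) (z + ((0:ℝ) : ℂ) * v) := by
      rw [hzv]; exact (hh.differentiableAt (hUo.mem_nhds hz)).hasDerivAt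
    have hd1 : HasDerivAt (deriv h) (deriv (deriv h) z) (z + ((0:ℝ) : ℂ) * v) := by
      rw [hzv]; exact (hh1.differentiableAt (hUo.mem_nhds hz)).hasDerivAt
    have hH0 : HasDerivAt (fun s : ℝ => h (c s)) (v * deriv h z) 0 := comp_line hd0
    have hH1 : HasDerivAt (fun s : ℝ => deriv h (c s)) (v * deriv (deriv h) z) 0 := comp_line hd1
    have hconj : HasDerivAt (fun s : ℝ => (starRingEnd ℂ) (h (c s)))
        ((starRingEnd ℂ) (v * deriv h z)) 0 := by
      have := (Complex.conjCLE.toContinuousLinearMap.hasFDerivAt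
        (x := h (c 0))).comp_hasDerivAt 0 hH0
      simpa [Function.comp_def, Complex.conjCAE_apply] using this
    have hP0 : HasDerivAt (fun s : ℝ => (starRingEnd ℂ) (h (c s)) * (v * deriv h (c s)))
        ((starRingEnd ℂ) (v * deriv h z) * (v * deriv h (c 0)) +
          (starRingEnd ℂ) (h (c 0)) * (v * (v * deriv (deriv h) z))) 0 :=
      hconj.mul (hH1.const_mul v)
    have hPre : HasDerivAt (fun s : ℝ => ((starRingEnd ℂ) (h (c s)) * (v * deriv h (c s))).re)
        (((starRingEnd ℂ) (v * deriv h z) * (v * deriv h (c 0)) +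
          (starRingEnd ℂ) (h (c 0)) * (v * (v * deriv (deriv h) z))).re) 0 := by
      have := (Complex.reCLM.hasFDerivAt).comp_hasDerivAt 0 hP0
      exact this
    have hnum := hPre.const_mul 2
    have hN0 : HasDerivAt (fun s : ℝ => a + ‖h (c s)‖ ^ 2)
        (2 * inner ℝ (h (c 0)) (v * deriv h z)) 0 := (hH0.norm_sq).const_add a
    have hden0 : a + ‖h (c 0)‖ ^ 2 ≠ 0 := by
      simpa [hc] using ne_of_gt hpos
    have hq := hnum.div hN0 hden0
    simp only [Pi.div_def] at hq
    refine HasDerivAt.congr_deriv hq (Eq.symm ?_)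
    show VAL h a z v = _
    unfold VAL
    have hcz : c 0 = z := by simp [hc]
    rw [hcz]
    have e1 : (starRingEnd ℂ) (v * deriv h z) * (v * deriv h z) = ((‖v‖ ^ 2 * ‖deriv h z‖ ^ 2 : ℝ) : ℂ) := by
      rw [Complex.conj_mul', norm_mul]
      push_cast
      ring
    have e2 : v * (v * deriv (deriv h) z) = v ^ 2 * deriv (deriv h) z := by ring
    have e3 : (inner ℝ (h z) (v * deriv h z) : ℝ) = ((starRingEnd ℂ) (h z) * (v * deriv h z)).re :=
      by rw [Complex.inner, mul_comm]
    rw [e2, e3, Complex.add_re, e1, Complex.ofReal_re]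
    ring

lemma VAL_sum (h : ℂ → ℂ) (a : ℝ) (z : ℂ) (hpos : 0 < a + ‖h z‖ ^ 2) :
    VAL h a z 1 + VAL h a z Complex.I = 4 * a * ‖deriv h z‖ ^ 2 / (a + ‖h z‖ ^ 2) ^ 2 := by
  unfold VAL
  set w : ℂ := (starRingEnd ℂ) (h z) * deriv h z with hw
  have e1 : ((starRingEnd ℂ) (h z) * ((1 : ℂ) ^ 2 * deriv (deriv h) z)).re
      + ((starRingEnd ℂ) (h z) * (Complex.I ^ 2 * deriv (deriv h) z)).re = 0 := by
    have : (starRingEnd ℂ) (h z) * (Complex.I ^ 2 * deriv (deriv h) z)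
        = -((starRingEnd ℂ) (h z) * ((1 : ℂ) ^ 2 * deriv (deriv h) z)) := by
      rw [Complex.I_sq]; ring
    rw [this, Complex.neg_re]; ring
  have e2 : ((starRingEnd ℂ) (h z) * ((1:ℂ) * deriv h z)).re = w.re := by
    rw [hw, one_mul]
  have e3 : ((starRingEnd ℂ) (h z) * (Complex.I * deriv h z)).re = -w.im := by
    have : (starRingEnd ℂ) (h z) * (Complex.I * deriv h z) = w * Complex.I := by
      rw [hw]; ring
    rw [this, Complex.mul_I_re]
  have e4 : w.re ^ 2 + w.im ^ 2 = ‖h z‖ ^ 2 * ‖deriv h z‖ ^ 2 := by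
    have h5 : w.re ^ 2 + w.im ^ 2 = Complex.normSq w := by
      rw [Complex.normSq_apply]; ring
    rw [h5, ← Complex.sq_norm, hw, norm_mul, RCLike.norm_conj, mul_pow]
  have h1 : ‖(1:ℂ)‖ ^ 2 = 1 := by simp
  have hI : ‖Complex.I‖ ^ 2 = 1 := by simp
  rw [← add_div]
  congr 1
  rw [e2, e3, h1, hI]
  linear_combination (2 * (a + ‖h z‖ ^ 2)) * e1 - 4 * e4

lemma iteratedDeriv_two_eq {F u' : ℝ → ℝ} {V : ℝ}
    (hev : ∀ᶠ t in nhds (0:ℝ), HasDerivAt F (u' t) t) (h0 : HasDerivAt u' V 0) :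
    iteratedDeriv 2 F 0 = V := by
  rw [iteratedDeriv_succ, iteratedDeriv_one]
  have h1 : deriv F =ᶠ[nhds (0:ℝ)] u' := hev.mono fun t ht => ht.deriv
  rw [h1.deriv_eq, h0.deriv]

lemma iteratedDeriv_two_congr {F G : ℝ → ℝ} (h : F =ᶠ[nhds (0:ℝ)] G) :
    iteratedDeriv 2 F 0 = iteratedDeriv 2 G 0 := by
  rw [iteratedDeriv_succ, iteratedDeriv_one, iteratedDeriv_succ, iteratedDeriv_one]
  exact (h.deriv).deriv_eq

lemma laplacian_congr {φ ψ : ℂ → ℝ} {z : ℂ} (h : φ =ᶠ[nhds z] ψ) :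
    laplacian φ z = laplacian ψ z := by
  unfold laplacian
  have t1 : Filter.Tendsto (fun t : ℝ => z + (t : ℂ)) (nhds 0) (nhds z) := by
    have : Continuous fun t : ℝ => z + (t : ℂ) := by fun_prop
    simpa using this.tendsto 0
  have t2 : Filter.Tendsto (fun t : ℝ => z + (t : ℂ) * Complex.I) (nhds 0) (nhds z) := by
    have : Continuous fun t : ℝ => z + (t : ℂ) * Complex.I := by fun_prop
    simpa using this.tendsto 0
  congr 1
  · exact iteratedDeriv_two_congr (h.comp_tendsto t1)
  · exact iteratedDeriv_two_congr (h.comp_tendsto t2)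

lemma lap_main (U : Set ℂ) (hUo : IsOpen U) (m : ℕ) (f g : ℂ → ℂ)
    (hf : DifferentiableOn ℂ f U) (hf0 : ∀ z ∈ U, f z ≠ 0)
    (hg : DifferentiableOn ℂ g U) (z : ℂ) (hz : z ∈ U) :
    laplacian (fun w => Real.log ((1 + ‖g w‖ ^ 2) ^ ((m : ℝ) / 2) * ‖f w‖)) z
      = 2 * m * ‖deriv g z‖ ^ 2 / (1 + ‖g z‖ ^ 2) ^ 2 := by
  have hposg : ∀ w : ℂ, (0:ℝ) < 1 + ‖g w‖ ^ 2 := fun w => by positivity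
  have hposf : (0:ℝ) < 0 + ‖f z‖ ^ 2 := by
    have := hf0 z hz
    have : ‖f z‖ ≠ 0 := norm_ne_zero_iff.2 this
    positivity
  have hψ : (fun w => Real.log ((1 + ‖g w‖ ^ 2) ^ ((m : ℝ) / 2) * ‖f w‖)) =ᶠ[nhds z]
      (fun w => ((m:ℝ)/2) * Real.log (1 + ‖g w‖ ^ 2) + (1/2) * Real.log (0 + ‖f w‖ ^ 2)) := by
    filter_upwards [hUo.mem_nhds hz] with w hw
    have hfw : ‖f w‖ ≠ 0 := norm_ne_zero_iff.2 (hf0 w hw)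
    rw [Real.log_mul (by positivity) hfw, Real.log_rpow (hposg w), zero_add, Real.log_pow]
    push_cast
    ring
  rw [laplacian_congr hψ]
  obtain ⟨ug1, hug1, hug1'⟩ := key' U hUo g hg 1 z hz (hposg z) 1
  obtain ⟨ugI, hugI, hugI'⟩ := key' U hUo g hg 1 z hz (hposg z) Complex.I
  obtain ⟨uf1, huf1, huf1'⟩ := key' U hUo f hf 0 z hz hposf 1
  obtain ⟨ufI, hufI, hufI'⟩ := key' U hUo f hf 0 z hz hposf Complex.I
  unfold laplacian
  have E1 : iteratedDeriv 2 (fun t : ℝ =>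
      ((m:ℝ)/2) * Real.log (1 + ‖g (z + (t:ℂ))‖ ^ 2) +
        (1/2) * Real.log (0 + ‖f (z + (t:ℂ))‖ ^ 2)) 0
      = ((m:ℝ)/2) * VAL g 1 z 1 + (1/2) * VAL f 0 z 1 := by
    have hfun : (fun t : ℝ =>
        ((m:ℝ)/2) * Real.log (1 + ‖g (z + (t:ℂ))‖ ^ 2) +
          (1/2) * Real.log (0 + ‖f (z + (t:ℂ))‖ ^ 2)) =
        (fun t : ℝ =>
        ((m:ℝ)/2) * Real.log (1 + ‖g (z + (t:ℂ) * 1)‖ ^ 2) +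
          (1/2) * Real.log (0 + ‖f (z + (t:ℂ) * 1)‖ ^ 2)) := by
      funext t; simp only [mul_one]
    rw [hfun]
    refine iteratedDeriv_two_eq (u' := fun t => ((m:ℝ)/2) * ug1 t + (1/2) * uf1 t) ?_ ?_
    · filter_upwards [hug1, huf1] with t h1 h2
      exact (h1.const_mul _).add (h2.const_mul _)
    · exact (hug1'.const_mul _).add (huf1'.const_mul _)
  have E2 : iteratedDeriv 2 (fun t : ℝ =>
      ((m:ℝ)/2) * Real.log (1 + ‖g (z + (t:ℂ) * Complex.I)‖ ^ 2) +
        (1/2) * Real.log (0 + ‖f (z + (t:ℂ) * Complex.I)‖ ^ 2)) 0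
      = ((m:ℝ)/2) * VAL g 1 z Complex.I + (1/2) * VAL f 0 z Complex.I := by
    refine iteratedDeriv_two_eq (u' := fun t => ((m:ℝ)/2) * ugI t + (1/2) * ufI t) ?_ ?_
    · filter_upwards [hugI, hufI] with t h1 h2
      exact (h1.const_mul _).add (h2.const_mul _)
    · exact (hugI'.const_mul _).add (hufI'.const_mul _)
  rw [E1, E2]
  have S1 := VAL_sum g 1 z (hposg z)
  have S2 := VAL_sum f 0 z hposf
  have hzero : (4:ℝ) * 0 * ‖deriv f z‖ ^ 2 / (0 + ‖f z‖ ^ 2) ^ 2 = 0 := by ring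
  linear_combination ((m:ℝ)/2) * S1 + (1/2) * S2

/-- for `λ = (1+|g|²)^{m/2}|f|` with `f` holomorphic nowhere zero and `g`
holomorphic, `λ` is smooth and positive, the Gaussian curvature `K = -(Δ log λ)/λ²`
equals `-2m|g'|²/((1+|g|²)^{m+2}|f|²)`, and on connected `U`, `K ≡ 0` iff `g` is
constant. -/
theorem gauss_curvature_formula (U : Set ℂ) (hUo : IsOpen U) (m : ℕ) (hm : 1 ≤ m)
    (f g : ℂ → ℂ) (hf : DifferentiableOn ℂ f U) (hf0 : ∀ z ∈ U, f z ≠ 0)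
    (hg : DifferentiableOn ℂ g U) :
    ContDiffOn ℝ (⊤ : ℕ∞) (fun z => (1 + ‖g z‖ ^ 2) ^ ((m : ℝ) / 2) * ‖f z‖) U ∧
    (∀ z ∈ U, 0 < (1 + ‖g z‖ ^ 2) ^ ((m : ℝ) / 2) * ‖f z‖) ∧
    (∀ z ∈ U,
      gaussCurv (fun w => (1 + ‖g w‖ ^ 2) ^ ((m : ℝ) / 2) * ‖f w‖) z =
        -(2 * (m : ℝ) * ‖deriv g z‖ ^ 2) / ((1 + ‖g z‖ ^ 2) ^ (m + 2) * ‖f z‖ ^ 2)) ∧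
    (IsConnected U →
      ((∀ z ∈ U, gaussCurv (fun w => (1 + ‖g w‖ ^ 2) ^ ((m : ℝ) / 2) * ‖f w‖) z = 0) ↔
        ∃ c : ℂ, ∀ z ∈ U, g z = c)) := by
  have hposg : ∀ w : ℂ, (0:ℝ) < 1 + ‖g w‖ ^ 2 := fun w => by positivity
  have hcurv : ∀ z ∈ U,
      gaussCurv (fun w => (1 + ‖g w‖ ^ 2) ^ ((m : ℝ) / 2) * ‖f w‖) z =
        -(2 * (m : ℝ) * ‖deriv g z‖ ^ 2) / ((1 + ‖g z‖ ^ 2) ^ (m + 2) * ‖f z‖ ^ 2) := by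
    intro z hz
    have hfz : ‖f z‖ ≠ 0 := norm_ne_zero_iff.2 (hf0 z hz)
    unfold gaussCurv
    rw [lap_main U hUo m f g hf hf0 hg z hz]
    have hlam2 : ((1 + ‖g z‖ ^ 2) ^ ((m:ℝ)/2) * ‖f z‖) ^ 2
        = (1 + ‖g z‖ ^ 2) ^ m * ‖f z‖ ^ 2 := by
      rw [mul_pow]
      congr 1
      rw [← Real.rpow_natCast ((1 + ‖g z‖ ^ 2) ^ ((m:ℝ)/2)) 2,
        ← Real.rpow_mul (le_of_lt (hposg z))]
      rw [show ((m:ℝ)/2) * (2:ℕ) = (m:ℝ) by push_cast; ring]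
      exact Real.rpow_natCast _ m
    rw [hlam2, pow_add]
    have hN : (1 + ‖g z‖ ^ 2) ≠ 0 := ne_of_gt (hposg z)
    field_simp
  refine ⟨?_, ?_, hcurv, ?_⟩
  · have hgR : ContDiffOn ℝ (⊤ : ℕ∞) g U := (hg.contDiffOn hUo).restrict_scalars ℝ
    have hfR : ContDiffOn ℝ (⊤ : ℕ∞) f U := (hf.contDiffOn hUo).restrict_scalars ℝ
    exact ((contDiffOn_const.add (hgR.norm_sq ℝ)).rpow_const_of_ne
      (fun x _ => ne_of_gt (hposg x))).mul (hfR.norm ℝ hf0)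
  · intro z hz
    have hfz : 0 < ‖f z‖ := norm_pos_iff.2 (hf0 z hz)
    have := Real.rpow_pos_of_pos (hposg z) ((m:ℝ)/2)
    positivity
  · intro hconn
    constructor
    · intro hK
      obtain ⟨z₀, hz₀⟩ := hconn.nonempty
      have hderiv0 : ∀ z ∈ U, deriv g z = 0 := by
        intro z hz
        have h1 := hK z hz
        rw [hcurv z hz] at h1
        have hD : (0:ℝ) < (1 + ‖g z‖ ^ 2) ^ (m + 2) * ‖f z‖ ^ 2 := by
          have hfz : 0 < ‖f z‖ := norm_pos_iff.2 (hf0 z hz)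
          positivity
        rw [div_eq_zero_iff] at h1
        rcases h1 with h1 | h1
        · have : ‖deriv g z‖ ^ 2 = 0 := by
            have hm' : (0:ℝ) < 2 * (m:ℝ) := by positivity
            nlinarith [neg_eq_zero.1 h1]
          simpa using pow_eq_zero_iff (n := 2) (by norm_num) |>.1 this
        · exact absurd h1 (ne_of_gt hD)
      -- g is constant near z₀
      obtain ⟨r, hr, hball⟩ := Metric.isOpen_iff.1 hUo z₀ hz₀
      have hconst : ∀ x ∈ Metric.ball z₀ r, g x = g z₀ := by
        intro x hx
        refine (convex_ball z₀ r).is_const_of_fderivWithin_eq_zero (hg.mono hball) ?_ hx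
          (Metric.mem_ball_self hr)
        intro y hy
        rw [fderivWithin_of_isOpen Metric.isOpen_ball hy]
        ext
        simp [← toSpanSingleton_deriv, hderiv0 y (hball hy)]
      have hev : g =ᶠ[nhds z₀] fun _ => g z₀ :=
        Filter.eventually_of_mem (Metric.isOpen_ball.mem_nhds (Metric.mem_ball_self hr)) hconst
      refine ⟨g z₀, fun z hz => ?_⟩
      exact (hg.analyticOnNhd hUo).eqOn_of_preconnected_of_eventuallyEq analyticOnNhd_const
        hconn.isPreconnected hz₀ hev hz
    · rintro ⟨c, hc⟩ z hz
      rw [hcurv z hz]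
      have hev : g =ᶠ[nhds z] fun _ => c :=
        Filter.eventually_of_mem (hUo.mem_nhds hz) hc
      have : deriv g z = 0 := by rw [hev.deriv_eq]; simp
      simp [this]
end
end

section
/- Let U ⊆ ℂ be a nonempty open connected set and F, G holomorphic functions on U with |F'(z)| < |G'(z)| for all z ∈ U (so the affine metric h = (|G'|² − |F'|²)|dz|² of the associated improper affine sphere is positive definite), and suppose h is complete. Then F'/G' is constant. (This is the analytic content of the parametric affine Bernstein theorem: any affine complete improper affine sphere in ℝ³ is an elliptic paraboloid.) -/
/-!
Since `√(|G'|² - |F'|²) ≤ |G'|`, the lift by a branch `σ` of `G⁻¹` of a radius of the disc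
`|w - G p| < R` has affine length at most `R`. By completeness it cannot leave `U`, so it accumulates
over its endpoint, where the local inverse of `G` continues `σ`. Compactness of the circle lets the
branch grow to a larger disc, and hence to an entire branch of `G⁻¹` through `p`. Then `(F'/G') ∘ σ`
is a bounded entire function, constant by Liouville, so `(F'/G')' = 0` on `U`.
-/

noncomputable section

/-- The length of a curve `γ : [0,1) → ℂ` in the conformal metric `lam(z)²|dz|²`. -/
noncomputable def curveLength (lam : ℂ → ℝ) (γ : ℝ → ℂ) : ENNReal :=
  ∫⁻ t in Set.Ioo (0:ℝ) 1, ENNReal.ofReal (lam (γ t) * ‖deriv γ t‖)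

/-- `γ` is piecewise C¹ on `[0,1)`: continuous, and differentiable off a countable set. -/
def PiecewiseC1 (γ : ℝ → ℂ) : Prop :=
  ContinuousOn γ (Set.Ico 0 1) ∧
    ∃ s : Set ℝ, s.Countable ∧ ∀ t ∈ Set.Ico (0:ℝ) 1 \ s, DifferentiableAt ℝ γ t

/-- A divergent curve in `U`, parametrized on `[0,1)`: a piecewise C¹ curve in `U` that
eventually leaves every compact subset of `U`. -/
def DivergentCurve (U : Set ℂ) (γ : ℝ → ℂ) : Prop :=
  PiecewiseC1 γ ∧ (∀ t ∈ Set.Ico (0:ℝ) 1, γ t ∈ U) ∧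
    ∀ K : Set ℂ, K ⊆ U → IsCompact K →
      ∃ t₀ ∈ Set.Ico (0:ℝ) 1, ∀ t, t₀ ≤ t → t < 1 → γ t ∉ K

/-- The conformal metric `lam²|dz|²` on `U` is complete: every divergent curve has
infinite length. -/
def MetricComplete (U : Set ℂ) (lam : ℂ → ℝ) : Prop :=
  ∀ γ : ℝ → ℂ, DivergentCurve U γ → curveLength lam γ = ⊤

/-- Geodesic distance from `p` to the boundary of `U` w.r.t. `lam²|dz|²`: the infimum
of the lengths of divergent curves emanating from `p`. -/
noncomputable def geoDist (U : Set ℂ) (lam : ℂ → ℝ) (p : ℂ) : ENNReal :=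
  ⨅ (γ : ℝ → ℂ) (_ : DivergentCurve U γ ∧ γ 0 = p), curveLength lam γ


open Metric Set Filter MeasureTheory Topology

def IsSectionOn {X Y : Type*} [TopologicalSpace X] [TopologicalSpace Y] (G : X → Y) (U : Set X)
    (V : Set Y) (σ : Y → X) : Prop :=
  ContinuousOn σ V ∧ MapsTo σ V U ∧ ∀ y ∈ V, G (σ y) = y

section Sections

variable {X Y : Type*} [TopologicalSpace X] [TopologicalSpace Y] {G : X → Y} {U : Set X}
  {V W : Set Y} {σ : Y → X}

theorem IsSectionOn.mono (hσ : IsSectionOn G U V σ) (hW : W ⊆ V) : IsSectionOn G U W σ :=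
  ⟨hσ.1.mono hW, hσ.2.1.mono_left hW, fun y hy => hσ.2.2 y (hW hy)⟩

theorem IsPreconnected.eqOn_of_locallyInjOn [T2Space X]
    (hinj : ∀ x ∈ U, ∃ N ∈ 𝓝 x, InjOn G N) (hV : IsPreconnected V) {s₁ s₂ : Y → X}
    (h₁ : ContinuousOn s₁ V) (h₂ : ContinuousOn s₂ V) (hU : MapsTo s₁ V U)
    (hG : ∀ y ∈ V, G (s₁ y) = G (s₂ y)) {y₀ : Y} (hy₀ : y₀ ∈ V) (h : s₁ y₀ = s₂ y₀) :
    EqOn s₁ s₂ V := by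
  have := isPreconnected_iff_preconnectedSpace.mp hV
  have hopen : IsOpen {y : V | s₁ y = s₂ y} := by
    refine isOpen_iff_mem_nhds.2 fun y (hy : s₁ y = s₂ y) => ?_
    obtain ⟨N, hN, hGN⟩ := hinj _ (hU y.2)
    have hN₁ : ∀ᶠ z : V in 𝓝 y, s₁ z ∈ N := h₁.domRestrict.continuousAt.preimage_mem_nhds hN
    have hN₂ : ∀ᶠ z : V in 𝓝 y, s₂ z ∈ N :=
      h₂.domRestrict.continuousAt.preimage_mem_nhds (by simpa [Set.domRestrict, ← hy] using hN)
    filter_upwards [hN₁, hN₂] with z hz₁ hz₂ using hGN hz₁ hz₂ (hG z z.2)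
  have huniv := IsClopen.eq_univ ⟨isClosed_eq h₁.domRestrict h₂.domRestrict, hopen⟩ ⟨⟨y₀, hy₀⟩, h⟩
  exact fun y hy => eq_univ_iff_forall.1 huniv ⟨y, hy⟩

theorem exists_isSectionOn_iUnion [Nonempty X] {ι : Type*} {W : ι → Set Y}
    (hW : ∀ i, IsOpen (W i)) {τ : ι → Y → X} (hτ : ∀ i, IsSectionOn G U (W i) (τ i))
    (hagree : ∀ i j, EqOn (τ i) (τ j) (W i ∩ W j)) :
    ∃ σ, IsSectionOn G U (⋃ i, W i) σ ∧ ∀ i, EqOn σ (τ i) (W i) := by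
  classical
  let σ : Y → X := fun y => if h : ∃ i, y ∈ W i then τ h.choose y else Classical.arbitrary X
  have hσ : ∀ i, EqOn σ (τ i) (W i) := fun i y hy => by
    have h : ∃ i, y ∈ W i := ⟨i, hy⟩
    simp only [σ, dif_pos h]
    exact hagree _ _ ⟨h.choose_spec, hy⟩
  refine ⟨σ, ⟨fun y hy => ?_, fun y hy => ?_, fun y hy => ?_⟩, hσ⟩ <;>
    obtain ⟨i, hi⟩ := mem_iUnion.1 hy
  · have hev : τ i =ᶠ[𝓝 y] σ := eventually_of_mem ((hW i).mem_nhds hi) fun z hz => (hσ i hz).symm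
    exact (((hτ i).1.continuousAt ((hW i).mem_nhds hi)).congr hev).continuousWithinAt
  · exact hσ i hi ▸ (hτ i).2.1 hi
  · rw [hσ i hi]; exact (hτ i).2.2 y hi

end Sections

section SphereGeometry

variable {E : Type*} [NormedAddCommGroup E] [NormedSpace ℝ E]

theorem ball_add_subset_ball_union_iUnion_ball_sphere (c : E) {R : ℝ} (hR : 0 < R) (δ : ℝ) :
    ball c (R + δ) ⊆ ball c R ∪ ⋃ w ∈ sphere c R, ball w δ := by
  intro z hz
  rcases lt_or_ge (dist z c) R with h | h
  · exact Or.inl h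
  have hd : 0 < ‖z - c‖ := by rw [← dist_eq_norm]; linarith
  refine Or.inr (mem_biUnion (x := c + (R / ‖z - c‖) • (z - c)) ?_ ?_)
  · rw [mem_sphere, dist_eq_norm, add_sub_cancel_left, norm_smul, Real.norm_eq_abs,
      abs_of_pos (by positivity), div_mul_cancel₀ _ hd.ne']
  · have hsub : z - (c + (R / ‖z - c‖) • (z - c)) = (1 - R / ‖z - c‖) • (z - c) := by module
    have hR' : R / ‖z - c‖ ≤ 1 := div_le_one_of_le₀ (by rwa [← dist_eq_norm]) hd.le
    rw [mem_ball, dist_eq_norm, hsub, norm_smul, Real.norm_eq_abs, abs_of_nonneg (by linarith),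
      sub_mul, one_mul, div_mul_cancel₀ _ hd.ne', ← dist_eq_norm]
    linarith [mem_ball.1 hz]

theorem ball_inter_ball_inter_ball_nonempty {c w₁ w₂ : E} {R δ : ℝ} (hR : R ≠ 0)
    (h₁ : w₁ ∈ closedBall c R) (h₂ : w₂ ∈ closedBall c R) (h : (ball w₁ δ ∩ ball w₂ δ).Nonempty) :
    (ball w₁ δ ∩ ball w₂ δ ∩ ball c R).Nonempty := by
  obtain ⟨z, hz₁, hz₂⟩ := h
  have hw : dist w₁ w₂ < 2 * δ := by
    linarith [dist_triangle_left w₁ w₂ z, mem_ball.1 hz₁, mem_ball.1 hz₂]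
  have hm : midpoint ℝ w₁ w₂ ∈ ball w₁ δ ∩ ball w₂ δ := by
    have e₁ := dist_left_midpoint (𝕜 := ℝ) w₁ w₂
    have e₂ := dist_right_midpoint (𝕜 := ℝ) w₁ w₂
    rw [Real.norm_two] at e₁ e₂
    rw [mem_inter_iff, mem_ball, mem_ball, dist_comm _ w₁, e₁, dist_comm (midpoint ℝ w₁ w₂), e₂]
    constructor <;> linarith
  have hmc : midpoint ℝ w₁ w₂ ∈ closure (ball c R) := by
    rw [closure_ball c hR]; exact (convex_closedBall c R).midpoint_mem h₁ h₂
  exact mem_closure_iff.1 hmc _ (isOpen_ball.inter isOpen_ball) hm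

end SphereGeometry

section LocalInverse

variable {𝕜 : Type*} [NontriviallyNormedField 𝕜] [CompleteSpace 𝕜] {G : 𝕜 → 𝕜} {G' q : 𝕜}

theorem HasStrictDerivAt.exists_mem_nhds_injOn (hG : HasStrictDerivAt G G' q) (hG' : G' ≠ 0) :
    ∃ N ∈ 𝓝 q, InjOn G N :=
  ⟨_, hG.eventually_left_inverse hG', fun x hx y hy hxy => by
    rw [← show _ = x from hx, ← show _ = y from hy, hxy]⟩

theorem HasStrictDerivAt.exists_isSectionOn_ball (hG : HasStrictDerivAt G G' q) (hG' : G' ≠ 0)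
    {U : Set 𝕜} (hU : U ∈ 𝓝 q) :
    ∃ ε > 0, ∃ τ, IsSectionOn G U (ball (G q) ε) τ ∧ τ (G q) = q := by
  set Φ := (hG.hasStrictFDerivAt_equiv hG').toOpenPartialHomeomorph G
  have hcont : ∀ᶠ y in 𝓝 (G q), ContinuousAt Φ.symm y :=
    eventually_of_mem (Φ.open_target.mem_nhds
      (hG.hasStrictFDerivAt_equiv hG').image_mem_toOpenPartialHomeomorph_target)
      fun y hy => Φ.continuousAt_symm hy
  obtain ⟨ε, hε, hball⟩ := eventually_nhds_iff_ball.1 <|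
    hcont.and <| (hG.eventually_right_inverse hG').and <|
      (hG.hasStrictFDerivAt_equiv hG').localInverse_tendsto hU
  exact ⟨ε, hε, Φ.symm, ⟨fun y hy => (hball y hy).1.continuousWithinAt,
    fun y hy => (hball y hy).2.2, fun y hy => (hball y hy).2.1⟩,
    (hG.hasStrictFDerivAt_equiv hG').localInverse_apply_image⟩

end LocalInverse

theorem IsSectionOn.hasDerivAt {𝕜 : Type*} [NontriviallyNormedField 𝕜] {G σ G' : 𝕜 → 𝕜}
    {U V : Set 𝕜} (hσ : IsSectionOn G U V σ) (hG : ∀ x ∈ U, HasDerivAt G (G' x) x)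
    (hG' : ∀ x ∈ U, G' x ≠ 0) {y : 𝕜} (hy : V ∈ 𝓝 y) : HasDerivAt σ (G' (σ y))⁻¹ y :=
  have hyU : σ y ∈ U := hσ.2.1 (mem_of_mem_nhds hy)
  (hG _ hyU).of_local_left_inverse (hσ.1.continuousAt hy) (hG' _ hyU)
    (eventually_of_mem hy hσ.2.2)

theorem exists_mapClusterPt_of_curveLength_ne_top {U : Set ℂ} {lam : ℂ → ℝ} {γ : ℝ → ℂ}
    (hcomp : MetricComplete U lam) (hγ : PiecewiseC1 γ) (hγU : ∀ t ∈ Ico (0 : ℝ) 1, γ t ∈ U)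
    (hlen : curveLength lam γ ≠ ⊤) : ∃ q ∈ U, MapClusterPt q (𝓝[<] 1) γ := by
  obtain ⟨K, hKU, hK, hfreq⟩ : ∃ K ⊆ U, IsCompact K ∧
      ∀ t₀ ∈ Ico (0 : ℝ) 1, ∃ t, t₀ ≤ t ∧ t < 1 ∧ γ t ∈ K := by
    by_contra! h
    exact hlen (hcomp γ ⟨hγ, hγU, h⟩)
  have hfreq' : ∃ᶠ t in 𝓝[<] (1 : ℝ), γ t ∈ K := by
    refine frequently_iff.2 fun {s} hs => ?_
    obtain ⟨l, hl, hls⟩ := mem_nhdsLT_iff_exists_Ioo_subset.1 hs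
    obtain ⟨t, ht₀, ht₁, htK⟩ :=
      hfreq (max 0 ((l + 1) / 2)) ⟨le_max_left _ _, max_lt one_pos (by linarith [mem_Iio.1 hl])⟩
    exact ⟨t, hls ⟨by linarith [le_max_right 0 ((l + 1) / 2), mem_Iio.1 hl], ht₁⟩, htK⟩
  obtain ⟨q, hqK, hq⟩ := hK.exists_mapClusterPt_of_frequently hfreq'
  exact ⟨q, hKU hqK, hq⟩

theorem AffineMap.lineMap_mem_ball {E : Type*} [NormedAddCommGroup E] [NormedSpace ℝ E]
    {c w : E} {R t : ℝ} (hR : 0 < R) (hw : w ∈ closedBall c R) (ht : t ∈ Ico (0 : ℝ) 1) :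
    AffineMap.lineMap c w t ∈ ball c R := by
  rw [mem_ball, dist_lineMap_left, Real.norm_of_nonneg ht.1, dist_comm]
  calc t * dist w c ≤ t * R := mul_le_mul_of_nonneg_left hw ht.1
    _ < R := by nlinarith [ht.2]

section Continuation

variable {U : Set ℂ} {G G' σ : ℂ → ℂ} {lam : ℂ → ℝ} {c w : ℂ} {R : ℝ}

theorem IsSectionOn.eqOn_ball_inter_ball {a b : ℂ} {r s : ℝ} {τ₁ τ₂ : ℂ → ℂ}
    (h₁ : IsSectionOn G U (ball a r) τ₁) (h₂ : IsSectionOn G U (ball b s) τ₂)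
    (hG : ∀ z ∈ U, HasStrictDerivAt G (G' z) z) (hG' : ∀ z ∈ U, G' z ≠ 0) {y : ℂ}
    (hy : y ∈ ball a r ∩ ball b s) (h : τ₁ y = τ₂ y) : EqOn τ₁ τ₂ (ball a r ∩ ball b s) :=
  IsPreconnected.eqOn_of_locallyInjOn (fun x hx => (hG x hx).exists_mem_nhds_injOn (hG' x hx))
    ((convex_ball a r).inter (convex_ball b s)).isPreconnected (h₁.1.mono inter_subset_left)
    (h₂.1.mono inter_subset_right) (h₁.2.1.mono_left inter_subset_left)
    (fun z hz => (h₁.2.2 z hz.1).trans (h₂.2.2 z hz.2).symm) hy h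

theorem IsSectionOn.hasDerivAt_comp_lineMap (hσ : IsSectionOn G U (ball c R) σ)
    (hG : ∀ z ∈ U, HasDerivAt G (G' z) z) (hG' : ∀ z ∈ U, G' z ≠ 0) (hR : 0 < R)
    (hw : w ∈ closedBall c R) {t : ℝ} (ht : t ∈ Ico (0 : ℝ) 1) :
    HasDerivAt (σ ∘ AffineMap.lineMap c w) ((w - c) • (G' (σ (AffineMap.lineMap c w t)))⁻¹) t :=
  (hσ.hasDerivAt hG hG' (isOpen_ball.mem_nhds (AffineMap.lineMap_mem_ball hR hw ht))).scomp t
    AffineMap.hasDerivAt_lineMap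

theorem IsSectionOn.curveLength_comp_lineMap_le (hσ : IsSectionOn G U (ball c R) σ)
    (hG : ∀ z ∈ U, HasDerivAt G (G' z) z) (hG' : ∀ z ∈ U, G' z ≠ 0)
    (hlam : ∀ z ∈ U, lam z ≤ ‖G' z‖) (hR : 0 < R) (hw : w ∈ sphere c R) :
    curveLength lam (σ ∘ AffineMap.lineMap c w) ≤ ENNReal.ofReal R := by
  have hbound : ∀ t ∈ Ioo (0 : ℝ) 1, ENNReal.ofReal
      (lam ((σ ∘ AffineMap.lineMap c w) t) * ‖deriv (σ ∘ AffineMap.lineMap c w) t‖) ≤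
      ENNReal.ofReal R := fun t ht => by
    have htI : t ∈ Ico (0 : ℝ) 1 := Ioo_subset_Ico_self ht
    set z := σ (AffineMap.lineMap c w t)
    have hzU : z ∈ U := hσ.2.1 (AffineMap.lineMap_mem_ball hR (sphere_subset_closedBall hw) htI)
    have hGz : 0 < ‖G' z‖ := norm_pos_iff.2 (hG' z hzU)
    rw [(hσ.hasDerivAt_comp_lineMap hG hG' hR (sphere_subset_closedBall hw) htI).deriv,
      smul_eq_mul, norm_mul, norm_inv, ← dist_eq_norm, mem_sphere.1 hw]
    refine ENNReal.ofReal_le_ofReal ?_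
    calc lam z * (R * ‖G' z‖⁻¹) ≤ ‖G' z‖ * (R * ‖G' z‖⁻¹) :=
          mul_le_mul_of_nonneg_right (hlam z hzU) (by positivity)
      _ = R := by field_simp
  calc curveLength lam (σ ∘ AffineMap.lineMap c w)
      ≤ ∫⁻ _ in Ioo (0 : ℝ) 1, ENNReal.ofReal R := setLIntegral_mono measurable_const hbound
    _ = ENNReal.ofReal R := by simp

theorem IsSectionOn.exists_preimage_mapClusterPt_comp_lineMap (hσ : IsSectionOn G U (ball c R) σ)
    (hG : ∀ z ∈ U, HasDerivAt G (G' z) z) (hG' : ∀ z ∈ U, G' z ≠ 0)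
    (hlam : ∀ z ∈ U, lam z ≤ ‖G' z‖) (hcomp : MetricComplete U lam) (hR : 0 < R)
    (hw : w ∈ sphere c R) :
    ∃ q ∈ U, G q = w ∧ MapClusterPt q (𝓝[<] (1 : ℝ)) (σ ∘ AffineMap.lineMap c w) := by
  have hw' := sphere_subset_closedBall hw
  have hmem (t : ℝ) (ht : t ∈ Ico (0 : ℝ) 1) : AffineMap.lineMap c w t ∈ ball c R :=
    AffineMap.lineMap_mem_ball hR hw' ht
  have hγ : PiecewiseC1 (σ ∘ AffineMap.lineMap c w) :=
    ⟨fun t ht => (hσ.hasDerivAt_comp_lineMap hG hG' hR hw' ht).continuousAt.continuousWithinAt,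
      ∅, countable_empty,
      fun t ht => (hσ.hasDerivAt_comp_lineMap hG hG' hR hw' ht.1).differentiableAt⟩
  obtain ⟨q, hqU, hq⟩ := exists_mapClusterPt_of_curveLength_ne_top hcomp hγ
    (fun t ht => hσ.2.1 (hmem t ht))
    (ne_top_of_le_ne_top ENNReal.ofReal_ne_top (hσ.curveLength_comp_lineMap_le hG hG' hlam hR hw))
  refine ⟨q, hqU, ?_, hq⟩
  have hGγ : G ∘ σ ∘ AffineMap.lineMap c w =ᶠ[𝓝[<] (1 : ℝ)] AffineMap.lineMap (k := ℝ) c w :=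
    eventually_of_mem (Ioo_mem_nhdsLT one_pos) fun t ht =>
      hσ.2.2 _ (hmem t (Ioo_subset_Ico_self ht))
  have hlim : Tendsto (AffineMap.lineMap (k := ℝ) c w) (𝓝[<] 1) (𝓝 w) :=
    (AffineMap.lineMap_continuous.tendsto' 1 w (by simp)).mono_left nhdsWithin_le_nhds
  exact eq_of_nhds_neBot
    (((hq.continuousAt_comp (hG q hqU).continuousAt).congrFun hGγ).clusterPt.mono hlim)

/-- Completeness enters here: the lift of the radius ending at `w` has finite length, so it
accumulates at a point `q ∈ U` over `w`, and the local inverse of `G` at `q` continues `σ`. -/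
theorem IsSectionOn.exists_extension_near_sphere (hσ : IsSectionOn G U (ball c R) σ)
    (hUo : IsOpen U) (hG : ∀ z ∈ U, HasStrictDerivAt G (G' z) z) (hG' : ∀ z ∈ U, G' z ≠ 0)
    (hlam : ∀ z ∈ U, lam z ≤ ‖G' z‖) (hcomp : MetricComplete U lam) (hR : 0 < R)
    (hw : w ∈ sphere c R) :
    ∃ ε > 0, ∃ τ, IsSectionOn G U (ball w ε) τ ∧ EqOn σ τ (ball w ε ∩ ball c R) := by
  obtain ⟨q, hqU, rfl, hq⟩ := hσ.exists_preimage_mapClusterPt_comp_lineMap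
    (fun z hz => (hG z hz).hasDerivAt) hG' hlam hcomp hR hw
  obtain ⟨N, hN, hGN⟩ := (hG q hqU).exists_mem_nhds_injOn (hG' q hqU)
  obtain ⟨ε, hε, τ, hτ, -⟩ :=
    (hG q hqU).exists_isSectionOn_ball (hG' q hqU) (inter_mem hN (hUo.mem_nhds hqU))
  have hlim : Tendsto (AffineMap.lineMap (k := ℝ) c (G q)) (𝓝[<] 1) (𝓝 (G q)) :=
    (AffineMap.lineMap_continuous.tendsto' 1 (G q) (by simp)).mono_left nhdsWithin_le_nhds
  obtain ⟨t, htN, htε, htI⟩ := ((hq.frequently hN).and_eventually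
    ((hlim.eventually (ball_mem_nhds _ hε)).and (Ioo_mem_nhdsLT one_pos))).exists
  have htR : AffineMap.lineMap c (G q) t ∈ ball c R :=
    AffineMap.lineMap_mem_ball hR (sphere_subset_closedBall hw) (Ioo_subset_Ico_self htI)
  have hτU : IsSectionOn G U (ball (G q) ε) τ :=
    ⟨hτ.1, fun z hz => (hτ.2.1 hz).2, hτ.2.2⟩
  refine ⟨ε, hε, τ, hτU, ?_⟩
  refine (hτU.eqOn_ball_inter_ball hσ hG hG' ⟨htε, htR⟩ (hGN (hτ.2.1 htε).1 htN ?_)).symm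
  rw [hσ.2.2 _ htR, hτ.2.2 _ htε]

theorem IsSectionOn.exists_uniform_extension_near_sphere (hσ : IsSectionOn G U (ball c R) σ)
    (hUo : IsOpen U) (hG : ∀ z ∈ U, HasStrictDerivAt G (G' z) z) (hG' : ∀ z ∈ U, G' z ≠ 0)
    (hlam : ∀ z ∈ U, lam z ≤ ‖G' z‖) (hcomp : MetricComplete U lam) (hR : 0 < R) :
    ∃ δ > 0, ∀ w ∈ sphere c R,
      ∃ τ, IsSectionOn G U (ball w δ) τ ∧ EqOn σ τ (ball w δ ∩ ball c R) := by
  choose! ε hε τ hτ hτσ using fun w (hw : w ∈ sphere c R) =>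
    hσ.exists_extension_near_sphere hUo hG hG' hlam hcomp hR hw
  obtain ⟨δ, hδ, hleb⟩ := lebesgue_number_lemma_of_metric (isCompact_sphere c R)
    (c := fun w : sphere c R => ball (w : ℂ) (ε w)) (fun _ => isOpen_ball)
    (fun w hw => mem_iUnion.2 ⟨⟨w, hw⟩, mem_ball_self (hε w hw)⟩)
  refine ⟨δ, hδ, fun w hw => ?_⟩
  obtain ⟨⟨v, hv⟩, hwv⟩ := hleb w hw
  exact ⟨τ v, (hτ v hv).mono hwv, (hτσ v hv).mono (inter_subset_inter_left _ hwv)⟩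

theorem IsSectionOn.exists_ball_add (hσ : IsSectionOn G U (ball c R) σ)
    (hUo : IsOpen U) (hG : ∀ z ∈ U, HasStrictDerivAt G (G' z) z) (hG' : ∀ z ∈ U, G' z ≠ 0)
    (hlam : ∀ z ∈ U, lam z ≤ ‖G' z‖) (hcomp : MetricComplete U lam) (hR : 0 < R) :
    ∃ δ > 0, ∃ σ', IsSectionOn G U (ball c (R + δ)) σ' ∧ EqOn σ' σ (ball c R) := by
  obtain ⟨δ, hδ, hpatch⟩ := hσ.exists_uniform_extension_near_sphere hUo hG hG' hlam hcomp hR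
  choose! τ hτ hτσ using hpatch
  let W : Option (sphere c R) → Set ℂ := fun o => o.elim (ball c R) fun w => ball (w : ℂ) δ
  let T : Option (sphere c R) → ℂ → ℂ := fun o => o.elim σ fun w => τ w
  have hagree : ∀ o₁ o₂, EqOn (T o₁) (T o₂) (W o₁ ∩ W o₂) := by
    rintro (_ | ⟨w₁, hw₁⟩) (_ | ⟨w₂, hw₂⟩)
    · exact fun _ _ => rfl
    · exact fun z hz => hτσ w₂ hw₂ ⟨hz.2, hz.1⟩
    · exact fun z hz => (hτσ w₁ hw₁ hz).symm
    rcases (ball w₁ δ ∩ ball w₂ δ).eq_empty_or_nonempty with h | h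
    · exact fun z hz => absurd (h.subset hz) (notMem_empty z)
    obtain ⟨y, hy, hyR⟩ := ball_inter_ball_inter_ball_nonempty hR.ne'
      (sphere_subset_closedBall hw₁) (sphere_subset_closedBall hw₂) h
    exact (hτ w₁ hw₁).eqOn_ball_inter_ball (hτ w₂ hw₂) hG hG' hy
      ((hτσ w₁ hw₁ ⟨hy.1, hyR⟩).symm.trans (hτσ w₂ hw₂ ⟨hy.2, hyR⟩))
  obtain ⟨σ', hσ', hσ'T⟩ := exists_isSectionOn_iUnion (W := W) (τ := T)
    (by rintro (_ | w) <;> exact isOpen_ball)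
    (by rintro (_ | ⟨w, hw⟩); exacts [hσ, hτ w hw]) hagree
  refine ⟨δ, hδ, σ', hσ'.mono ?_, hσ'T none⟩
  refine (ball_add_subset_ball_union_iUnion_ball_sphere c hR δ).trans ?_
  rintro z (hz | hz)
  · exact mem_iUnion.2 ⟨none, hz⟩
  · obtain ⟨w, hw, hzw⟩ := mem_iUnion₂.1 hz
    exact mem_iUnion.2 ⟨some ⟨w, hw⟩, hzw⟩

theorem exists_isSectionOn_univ (hUo : IsOpen U) (hG : ∀ z ∈ U, HasStrictDerivAt G (G' z) z)
    (hG' : ∀ z ∈ U, G' z ≠ 0) (hlam : ∀ z ∈ U, lam z ≤ ‖G' z‖) (hcomp : MetricComplete U lam)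
    {p : ℂ} (hp : p ∈ U) : ∃ σ, IsSectionOn G U univ σ ∧ σ (G p) = p := by
  set S := {R : ℝ | 0 < R ∧ ∃ σ, IsSectionOn G U (ball (G p) R) σ ∧ σ (G p) = p}
  obtain ⟨ε, hε, hεS⟩ : ∃ ε > 0, ε ∈ S := by
    obtain ⟨ε, hε, τ, hτ, hτp⟩ := (hG p hp).exists_isSectionOn_ball (hG' p hp) (hUo.mem_nhds hp)
    exact ⟨ε, hε, hε, τ, hτ, hτp⟩
  obtain ⟨σ, hσ, hσp⟩ : ∃ σ, IsSectionOn G U (⋃ R : S, ball (G p) R) σ ∧ σ (G p) = p := by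
    choose τ hτ hτp using fun R : S => R.2.2
    obtain ⟨σ, hσ, hστ⟩ := exists_isSectionOn_iUnion (fun _ => isOpen_ball) hτ fun R₁ R₂ =>
      (hτ R₁).eqOn_ball_inter_ball (hτ R₂) hG hG' ⟨mem_ball_self R₁.2.1, mem_ball_self R₂.2.1⟩
        ((hτp R₁).trans (hτp R₂).symm)
    exact ⟨σ, hσ, (hστ ⟨ε, hεS⟩ (mem_ball_self hε)).trans (hτp _)⟩
  refine ⟨σ, hσ.mono fun z _ => ?_, hσp⟩
  -- Otherwise the union is `ball (G p) (sSup S)`, and extending across its boundary beats `sSup S`.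
  by_contra hz
  have hS : BddAbove S :=
    ⟨dist z (G p), fun R hR => not_lt.1 fun h => hz (mem_iUnion.2 ⟨⟨R, hR⟩, mem_ball.2 h⟩)⟩
  have hr : 0 < sSup S := hε.trans_le (le_csSup hS hεS)
  have hball : ball (G p) (sSup S) ⊆ ⋃ R : S, ball (G p) R := fun y hy => by
    obtain ⟨R, hRS, hyR⟩ := exists_lt_of_lt_csSup ⟨ε, hεS⟩ (mem_ball.1 hy)
    exact mem_iUnion.2 ⟨⟨R, hRS⟩, mem_ball.2 hyR⟩
  obtain ⟨δ, hδ, σ', hσ', hσ'σ⟩ := (hσ.mono hball).exists_ball_add hUo hG hG' hlam hcomp hr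
  have hmem : sSup S + δ ∈ S := ⟨by linarith, σ', hσ', (hσ'σ (mem_ball_self hr)).trans hσp⟩
  linarith [le_csSup hS hmem]

end Continuation

/-- Liouville's theorem, transported to `U` along an entire section of `G`. -/
theorem IsSectionOn.deriv_eq_zero_of_isBounded_image {E : Type*} [NormedAddCommGroup E]
    [NormedSpace ℂ E] {U : Set ℂ} {G G' σ : ℂ → ℂ} (hσ : IsSectionOn G U univ σ) (hUo : IsOpen U)
    (hG : ∀ z ∈ U, HasDerivAt G (G' z) z) (hG' : ∀ z ∈ U, G' z ≠ 0) {f : ℂ → E}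
    (hf : DifferentiableOn ℂ f U) (hb : Bornology.IsBounded (f '' U)) {p : ℂ}
    (hσp : σ (G p) = p) : deriv f p = 0 := by
  have hσ' (y : ℂ) : HasDerivAt σ (G' (σ y))⁻¹ y := hσ.hasDerivAt hG hG' univ_mem
  have hf' (y : ℂ) : HasDerivAt f (deriv f (σ y)) (σ y) :=
    (hf.differentiableAt (hUo.mem_nhds (hσ.2.1 (mem_univ y)))).hasDerivAt
  have hfσ : Differentiable ℂ (f ∘ σ) := fun y => ((hf' y).scomp y (hσ' y)).differentiableAt
  have hconst : f ∘ σ = fun _ => f p := funext fun y => by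
    refine (hfσ.apply_eq_apply_of_bounded (hb.subset ?_) y (G p)).trans (congrArg f hσp)
    exact range_subset_iff.2 fun y => mem_image_of_mem f (hσ.2.1 (mem_univ y))
  have hzero := ((hf' (G p)).scomp (G p) (hσ' (G p))).unique (hconst ▸ hasDerivAt_const _ _)
  rw [hσp, smul_eq_zero] at hzero
  exact hzero.resolve_left (inv_ne_zero (hG' p (hσp ▸ hσ.2.1 (mem_univ (G p)))))

/-- analytic parametric affine Bernstein theorem. If `|F'| < |G'|` on `U`
and the affine metric `h = (|G'|²-|F'|²)|dz|²` is complete, then `F'/G'` is constant. -/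
theorem affine_bernstein (U : Set ℂ) (hUo : IsOpen U) (hUc : IsConnected U)
    (F G : ℂ → ℂ) (hF : DifferentiableOn ℂ F U) (hG : DifferentiableOn ℂ G U)
    (hlt : ∀ z ∈ U, ‖deriv F z‖ < ‖deriv G z‖)
    (hcomp : MetricComplete U
      (fun z => Real.sqrt (‖deriv G z‖ ^ 2 - ‖deriv F z‖ ^ 2))) :
    ∃ c : ℂ, ∀ z ∈ U, deriv F z / deriv G z = c := by
  have hG' : ∀ z ∈ U, deriv G z ≠ 0 := fun z hz =>
    norm_pos_iff.1 ((norm_nonneg _).trans_lt (hlt z hz))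
  have hGs : ∀ z ∈ U, HasStrictDerivAt G (deriv G z) z := fun z hz =>
    (hG.analyticOnNhd hUo z hz).hasStrictDerivAt
  have hlam : ∀ z ∈ U, √(‖deriv G z‖ ^ 2 - ‖deriv F z‖ ^ 2) ≤ ‖deriv G z‖ := fun z _ =>
    Real.sqrt_le_iff.2 ⟨norm_nonneg _, by nlinarith [sq_nonneg ‖deriv F z‖]⟩
  set ν := fun z => deriv F z / deriv G z
  have hν : DifferentiableOn ℂ ν U := (hF.deriv hUo).div (hG.deriv hUo) hG'
  have hνb : Bornology.IsBounded (ν '' U) := (isBounded_ball (x := 0) (r := 1)).subset <| by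
    rintro _ ⟨z, hz, rfl⟩
    rw [mem_ball_zero_iff, norm_div, div_lt_one ((norm_nonneg _).trans_lt (hlt z hz))]
    exact hlt z hz
  have hdν : EqOn (deriv ν) 0 U := fun p hp => by
    obtain ⟨σ, hσ, hσp⟩ := exists_isSectionOn_univ hUo hGs hG' hlam hcomp hp
    exact hσ.deriv_eq_zero_of_isBounded_image hUo (fun z hz => (hGs z hz).hasDerivAt) hG' hν hνb hσp
  obtain ⟨p₀, hp₀⟩ := hUc.nonempty
  exact ⟨ν p₀, fun z hz => hUo.is_const_of_deriv_eq_zero hUc.isPreconnected hν hdν hz hp₀⟩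
end
end

section
/- Let p₀ ∈ ℂ, let h be a holomorphic function on an open neighborhood V of p₀ with h(p₀) = 0 and h not identically zero, and let μ > 1 be a real number. Then every piecewise C¹ curve γ : [0,1) → V ∖ {z : h(z) = 0} with γ(t) → p₀ as t → 1 satisfies ∫₀¹ |h(γ(t))|^{−μ} |γ'(t)| dt = ∞. (This is the step in the proof of the main curvature estimate showing that a curve of finite length in the auxiliary flat metric dσ² = |g'|^{−2λ/(1−λ)} w |dz|², with λ/(1−λ) > 1, cannot converge to a zero of g', and hence is divergent in the original surface.) -/
/-!
Since `h` is differentiable at its zero `p₀`, `‖h z‖ ≤ M ‖z - p₀‖` near `p₀`. For every small `ε`,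
a curve converging to `p₀` must, after its last visit to the sphere of radius `2ε`, cross the
annulus `ε ≤ ‖z - p₀‖ ≤ 2ε`; along that piece the weight `‖h‖^(-μ)` is at least `(2Mε)^(-μ)` and
the Euclidean length is at least `ε`, so the weighted length is at least `(2M)^(-μ) ε^(1-μ)`.
Since `μ > 1`, this bound tends to `∞` as `ε → 0`.
-/

noncomputable section

open Set Filter Topology MeasureTheory

theorem ContinuousOn.exists_forall_Ioc_lt {f : ℝ → ℝ} {a b v : ℝ} (hab : a ≤ b)
    (hf : ContinuousOn f (Icc a b)) (ha : v ≤ f a) (hb : f b < v) :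
    ∃ c ∈ Ico a b, v ≤ f c ∧ ∀ t ∈ Ioc c b, f t < v := by
  have hK : IsCompact (Icc a b ∩ f ⁻¹' Ici v) :=
    isCompact_Icc.of_isClosed_subset (hf.preimage_isClosed_of_isClosed isClosed_Icc isClosed_Ici)
      inter_subset_left
  obtain ⟨c, ⟨hc, hvc⟩, hmax⟩ := hK.exists_isGreatest ⟨a, ⟨left_mem_Icc.2 hab, ha⟩⟩
  refine ⟨c, ⟨hc.1, hc.2.lt_of_ne ?_⟩, hvc, fun t ht => not_le.1 fun hvt => ?_⟩
  · rintro rfl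
    exact (lt_irrefl v) (hvc.trans_lt hb)
  · exact (hmax ⟨⟨hc.1.trans ht.1.le, ht.2⟩, hvt⟩).not_gt ht.1

section Length

variable {E : Type*} [NormedAddCommGroup E] [NormedSpace ℝ E] [CompleteSpace E]
  {γ : ℝ → E} {a b : ℝ} {s : Set ℝ}

theorem enorm_sub_le_setLIntegral_enorm_deriv (hab : a ≤ b) (hs : s.Countable)
    (hγc : ContinuousOn γ (Icc a b)) (hγd : ∀ t ∈ Ioo a b \ s, DifferentiableAt ℝ γ t) :
    ‖γ b - γ a‖ₑ ≤ ∫⁻ t in Ioo a b, ‖deriv γ t‖ₑ := by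
  by_cases hint : IntegrableOn (deriv γ) (Ioo a b)
  · rw [← integral_eq_of_hasDerivAt_off_countable_of_le γ (deriv γ) hab hs hγc
      (fun t ht => (hγd t ht).hasDerivAt)
      ((intervalIntegrable_iff_integrableOn_Ioo_of_le hab).2 hint),
      intervalIntegral.integral_of_le hab, integral_Ioc_eq_integral_Ioo]
    exact enorm_integral_le_lintegral_enorm _
  · have hinf : ¬ HasFiniteIntegral (deriv γ) (volume.restrict (Ioo a b)) :=
      fun hfin => hint ⟨aestronglyMeasurable_deriv _ _, hfin⟩
    rw [hasFiniteIntegral_iff_enorm, not_lt, top_le_iff] at hinf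
    exact hinf ▸ le_top

theorem ofReal_mul_norm_sub_le_setLIntegral {ρ : ℝ → ℝ} {m : ℝ} (hab : a ≤ b) (hm : 0 ≤ m)
    (hs : s.Countable) (hγc : ContinuousOn γ (Icc a b))
    (hγd : ∀ t ∈ Ioo a b \ s, DifferentiableAt ℝ γ t) (hρ : ∀ t ∈ Ioo a b, m ≤ ρ t) :
    ENNReal.ofReal (m * ‖γ b - γ a‖) ≤ ∫⁻ t in Ioo a b, ENNReal.ofReal (ρ t * ‖deriv γ t‖) := by
  calc ENNReal.ofReal (m * ‖γ b - γ a‖) = ENNReal.ofReal m * ‖γ b - γ a‖ₑ := by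
        rw [ENNReal.ofReal_mul hm, ofReal_norm]
    _ ≤ ENNReal.ofReal m * ∫⁻ t in Ioo a b, ‖deriv γ t‖ₑ := by
        gcongr; exact enorm_sub_le_setLIntegral_enorm_deriv hab hs hγc hγd
    _ = ∫⁻ t in Ioo a b, ENNReal.ofReal m * ‖deriv γ t‖ₑ :=
        (lintegral_const_mul' _ _ ENNReal.ofReal_ne_top).symm
    _ ≤ ∫⁻ t in Ioo a b, ENNReal.ofReal (ρ t * ‖deriv γ t‖) := by
        refine setLIntegral_mono' measurableSet_Ioo fun t ht => ?_
        rw [ENNReal.ofReal_mul (hm.trans (hρ t ht)), ofReal_norm]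
        gcongr
        exact hρ t ht

theorem rpow_mul_le_setLIntegral_of_crossing {ρ : ℝ → ℝ} {p₀ : E} {M ε μ : ℝ} (hab : a ≤ b)
    (hM : 0 < M) (hε : 0 < ε) (hμ : 0 ≤ μ) (hs : s.Countable) (hγc : ContinuousOn γ (Icc a b))
    (hγd : ∀ t ∈ Ioo a b \ s, DifferentiableAt ℝ γ t) (ha : 2 * ε ≤ ‖γ a - p₀‖)
    (hb : ‖γ b - p₀‖ ≤ ε) (hnear : ∀ t ∈ Ioo a b, ‖γ t - p₀‖ < 2 * ε)
    (hρ : ∀ t ∈ Ioo a b, 0 < ρ t ∧ ρ t ≤ M * ‖γ t - p₀‖) :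
    ENNReal.ofReal ((2 * M) ^ (-μ) * ε ^ (1 - μ)) ≤
      ∫⁻ t in Ioo a b, ENNReal.ofReal (ρ t ^ (-μ) * ‖deriv γ t‖) := by
  have hweight : ∀ t ∈ Ioo a b, (2 * M * ε) ^ (-μ) ≤ ρ t ^ (-μ) := fun t ht =>
    Real.rpow_le_rpow_of_nonpos (hρ t ht).1
      ((hρ t ht).2.trans (by nlinarith [hnear t ht])) (neg_nonpos.2 hμ)
  have hdisp : ε ≤ ‖γ b - γ a‖ := by
    have := norm_sub_norm_le (γ a - p₀) (γ b - p₀)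
    rw [sub_sub_sub_cancel_right, norm_sub_rev (γ a) (γ b)] at this
    linarith
  calc ENNReal.ofReal ((2 * M) ^ (-μ) * ε ^ (1 - μ)) = ENNReal.ofReal ((2 * M * ε) ^ (-μ) * ε) := by
        rw [Real.mul_rpow (by positivity) hε.le, sub_eq_neg_add, Real.rpow_add hε, Real.rpow_one,
          mul_assoc]
    _ ≤ ENNReal.ofReal ((2 * M * ε) ^ (-μ) * ‖γ b - γ a‖) := by gcongr
    _ ≤ _ := ofReal_mul_norm_sub_le_setLIntegral hab (by positivity) hs hγc hγd hweight

end Length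

theorem eq_top_of_eventually_ofReal_mul_rpow_le {x : ENNReal} {C α : ℝ} (hC : 0 < C) (hα : α < 0)
    (h : ∀ᶠ ε in 𝓝[>] 0, ENNReal.ofReal (C * ε ^ α) ≤ x) : x = ⊤ :=
  top_unique <| le_of_tendsto
    (ENNReal.tendsto_ofReal_atTop.comp ((tendsto_rpow_neg_nhdsGT_zero hα).const_mul_atTop hC)) h

theorem infinite_length_to_zero_general (p₀ : ℂ) (V : Set ℂ) (hV : IsOpen V) (hp₀ : p₀ ∈ V)
    (h : ℂ → ℂ) (hh : DifferentiableOn ℂ h V) (h0 : h p₀ = 0)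
    (μ : ℝ) (hμ : 1 < μ)
    (γ : ℝ → ℂ) (hγ : PiecewiseC1 γ)
    (hγV : ∀ t ∈ Set.Ico (0:ℝ) 1, γ t ∈ V ∧ h (γ t) ≠ 0)
    (hlim : Filter.Tendsto γ (nhdsWithin 1 (Set.Iio 1)) (nhds p₀)) :
    ∫⁻ t in Set.Ioo (0:ℝ) 1, ENNReal.ofReal (‖h (γ t)‖ ^ (-μ) * ‖deriv γ t‖) = ⊤ := by
  obtain ⟨hγc, s, hs, hγd⟩ := hγ
  obtain ⟨M, hM, hhM⟩ := (hh.differentiableAt (hV.mem_nhds hp₀)).isBigO_sub.exists_pos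
  obtain ⟨l, hl, hlate⟩ := mem_nhdsLT_iff_exists_Ioo_subset.1
    (inter_mem (Ioo_mem_nhdsLT one_pos) (hlim.eventually hhM.bound))
  obtain ⟨a, hla, ha1⟩ := exists_between (mem_Iio.1 hl)
  have ha0 : 0 < a := (hlate ⟨hla, ha1⟩).1.1
  have hρ : ∀ t ∈ Ioo a 1, 0 < ‖h (γ t)‖ ∧ ‖h (γ t)‖ ≤ M * ‖γ t - p₀‖ := fun t ht =>
    ⟨norm_pos_iff.2 (hγV t ⟨ha0.le.trans ht.1.le, ht.2⟩).2,
      by simpa [h0] using (hlate ⟨hla.trans ht.1, ht.2⟩).2⟩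
  have hra : 0 < ‖γ a - p₀‖ :=
    norm_pos_iff.2 (sub_ne_zero.2 fun he => (hγV a ⟨ha0.le, ha1⟩).2 (by rw [he, h0]))
  refine eq_top_of_eventually_ofReal_mul_rpow_le (C := (2 * M) ^ (-μ)) (by positivity)
    (by linarith : 1 - μ < 0) ?_
  filter_upwards [Ioo_mem_nhdsGT (half_pos hra)] with ε ⟨hε, hεa⟩
  obtain ⟨b, ⟨hab, hb1⟩, hb⟩ := Filter.nonempty_of_mem
    (inter_mem (Ioo_mem_nhdsLT ha1) (hlim (Metric.ball_mem_nhds p₀ hε)))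
  rw [mem_preimage, Metric.mem_ball, dist_eq_norm] at hb
  have hsub : Icc a b ⊆ Ico 0 1 := fun t ht => ⟨ha0.le.trans ht.1, ht.2.trans_lt hb1⟩
  obtain ⟨c, hc, hcv, hnear⟩ := ContinuousOn.exists_forall_Ioc_lt (f := fun t => ‖γ t - p₀‖)
    (v := 2 * ε) hab.le (((hγc.mono hsub).sub continuousOn_const).norm) (by linarith) (by linarith)
  have hcb : Icc c b ⊆ Icc a b := Icc_subset_Icc_left hc.1
  calc _ ≤ ∫⁻ t in Ioo c b, ENNReal.ofReal (‖h (γ t)‖ ^ (-μ) * ‖deriv γ t‖) :=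
        rpow_mul_le_setLIntegral_of_crossing hc.2.le hM hε (by linarith) hs
          (hγc.mono (hcb.trans hsub))
          (fun t ht => hγd t ⟨hsub (hcb (Ioo_subset_Icc_self ht.1)), ht.2⟩) hcv hb.le
          (fun t ht => hnear t (Ioo_subset_Ioc_self ht))
          (fun t ht => hρ t ⟨hc.1.trans_lt ht.1, ht.2.trans hb1⟩)
    _ ≤ _ := lintegral_mono_set (Ioo_subset_Ioo (ha0.trans_le hc.1).le hb1.le)

/-- if `h` is holomorphic near `p₀`, `h(p₀) = 0`, `h ≢ 0`, and `μ > 1`,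
then every piecewise C¹ curve in `V ∖ {h = 0}` converging to `p₀` has infinite length
in the metric `|h|^{-2μ}|dz|²`. -/
theorem infinite_length_to_zero (p₀ : ℂ) (V : Set ℂ) (hV : IsOpen V) (hp₀ : p₀ ∈ V)
    (h : ℂ → ℂ) (hh : DifferentiableOn ℂ h V) (h0 : h p₀ = 0)
    (hne : ¬ ∀ z ∈ V, h z = 0) (μ : ℝ) (hμ : 1 < μ)
    (γ : ℝ → ℂ) (hγ : PiecewiseC1 γ)
    (hγV : ∀ t ∈ Set.Ico (0:ℝ) 1, γ t ∈ V ∧ h (γ t) ≠ 0)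
    (hlim : Filter.Tendsto γ (nhdsWithin 1 (Set.Iio 1)) (nhds p₀)) :
    ∫⁻ t in Set.Ioo (0:ℝ) 1, ENNReal.ofReal (‖h (γ t)‖ ^ (-μ) * ‖deriv γ t‖) = ⊤ :=
  infinite_length_to_zero_general p₀ V hV hp₀ h hh h0 μ hμ γ hγ hγV hlim
end
end
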